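/- arXiv:1701.03662 — 2 statements merged into one kernel-verified Lean document; each statement's English description precedes it below -/
import Mathlib

section
/- Let D < 0 with D ≡ r^2 (mod 4N) and λ_r as above. The intersection 𝒩 = L ∩ Q·λ_r equals Z·(2N/t)·λ_r where t = gcd(r, 2N), and its dual lattice inside Q·λ_r is 𝒩' = Z·(t/D)·λ_r. -/
/-- The lattice L of integral trace-zero matrices of level N:
L = { [[b, -a/N],[c, -b]] : a,b,c ∈ ℤ }. -/
def Lset (N : ℕ) : Set (Matrix (Fin 2) (Fin 2) ℚ) :=
  {x | ∃ a b c : ℤ, x = !![(b : ℚ), -(a : ℚ) / (N : ℚ); (c : ℚ), -(b : ℚ)]}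

/-- The special vector λ_r = [[r/2N, 1/N],[(D - r²)/4N, -r/2N]]. -/
noncomputable def lambdaR (N : ℕ) (D r : ℤ) : Matrix (Fin 2) (Fin 2) ℚ :=
  !![(r : ℚ) / (2 * N), 1 / (N : ℚ);
     ((D : ℚ) - (r : ℚ) ^ 2) / (4 * N), -(r : ℚ) / (2 * N)]

/-!
Writing `q • λ_r = [[b, -a/N], [c, -b]]`, the upper right entry forces `q = -a ∈ ℤ`, the lower left
entry is then automatically integral because `4N ∣ D - r²`, and the upper left entry asks for
`2N ∣ q r`, i.e. `2N/t ∣ q`. On `ℚ λ_r` the pairing is `N tr((p λ_r)(q λ_r)) = p q D / 2N`, so pairing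
with the generator `(2N/t) λ_r` of `𝒩` gives `p D / t`, which is integral exactly when `p ∈ ℤ t/D`.
-/

theorem Int.dvd_mul_iff_div_gcd_dvd {a b c : ℤ} (ha : a ≠ 0) :
    a ∣ b * c ↔ a / (Int.gcd a c : ℤ) ∣ b := by
  have hg : 0 < Int.gcd a c := Int.gcd_pos_of_ne_zero_left c ha
  obtain ⟨a', c', hcop, ha', hc'⟩ := Int.exists_gcd_one hg
  have hg0 : (Int.gcd a c : ℤ) ≠ 0 := by exact_mod_cast hg.ne'
  generalize (Int.gcd a c : ℤ) = g at hg0 ha' hc'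
  subst ha' hc'
  rw [Int.mul_ediv_cancel _ hg0, ← mul_assoc]
  calc a' * g ∣ b * c' * g ↔ a' ∣ b * c' := mul_dvd_mul_iff_right hg0
    _ ↔ a' ∣ b := ⟨fun h => Int.dvd_of_dvd_mul_left_of_gcd_one h hcop, fun h => h.mul_right c'⟩

theorem forall_intCast_mul_eq_intCast_iff {R : Type*} [Ring R] (a : R) :
    (∀ m : ℤ, ∃ k : ℤ, (m : R) * a = k) ↔ ∃ k : ℤ, a = k :=
  ⟨fun h => by simpa using h 1, fun ⟨k, hk⟩ m => ⟨m * k, by rw [hk, Int.cast_mul]⟩⟩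

section lambdaR

variable {N : ℕ} {D r : ℤ}

theorem smul_lambdaR_mem_Lset_iff (hN : 0 < N) (hr : 4 * (N : ℤ) ∣ D - r ^ 2) (q : ℚ) :
    q • lambdaR N D r ∈ Lset N ↔ ∃ n : ℤ, q = n ∧ 2 * (N : ℤ) ∣ n * r := by
  have hN' : (N : ℚ) ≠ 0 := by positivity
  constructor
  · rintro ⟨a, b, c, hx⟩
    have h00 := congrFun (congrFun hx 0) 0
    have h01 := congrFun (congrFun hx 0) 1
    simp only [lambdaR, Matrix.smul_apply, Matrix.of_apply, Matrix.cons_val', Matrix.cons_val_zero,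
      Matrix.cons_val_one, Matrix.empty_val', Matrix.cons_val_fin_one, smul_eq_mul] at h00 h01
    have hq : q = (-a : ℤ) := by
      field_simp at h01
      push_cast
      linarith
    refine ⟨-a, hq, b, ?_⟩
    rw [hq] at h00
    field_simp at h00
    exact_mod_cast h00
  · rintro ⟨n, rfl, b, hb⟩
    obtain ⟨s, hs⟩ := hr
    have hbQ : (n : ℚ) * r = 2 * N * b := by exact_mod_cast hb
    have hsQ : (D : ℚ) - r ^ 2 = 4 * N * s := by exact_mod_cast hs
    refine ⟨-n, b, n * s, ?_⟩
    ext i j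
    fin_cases i <;> fin_cases j <;>
      simp only [lambdaR, Matrix.smul_apply, Matrix.of_apply, Matrix.cons_val', Matrix.cons_val_zero,
        Matrix.cons_val_one, Matrix.empty_val', Matrix.cons_val_fin_one, smul_eq_mul, Fin.mk_one,
        Fin.zero_eta, Int.cast_neg, Int.cast_mul] <;> field_simp
    · linear_combination hbQ
    · linear_combination (n : ℚ) * hsQ
    · linear_combination -hbQ

theorem smul_lambdaR_mem_Lset_iff_exists_mul (hN : 0 < N) (hr : 4 * (N : ℤ) ∣ D - r ^ 2)
    (q : ℚ) : q • lambdaR N D r ∈ Lset N ↔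
      ∃ m : ℤ, q = m * (2 * N / (Int.gcd r (2 * N) : ℚ)) := by
  have h2N : 2 * (N : ℤ) ≠ 0 := by positivity
  have ht : (Int.gcd r (2 * N) : ℚ) ≠ 0 := by exact_mod_cast (Int.gcd_pos_of_ne_zero_right r h2N).ne'
  have hcast : ((2 * N / Int.gcd r (2 * N) : ℤ) : ℚ) = 2 * N / (Int.gcd r (2 * N) : ℚ) := by
    rw [Int.cast_div (Int.gcd_dvd_right r _) (by exact_mod_cast ht)]
    push_cast
    rfl
  simp_rw [smul_lambdaR_mem_Lset_iff hN hr, Int.dvd_mul_iff_div_gcd_dvd h2N, Int.gcd_comm _ r]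
  constructor
  · rintro ⟨n, rfl, m, rfl⟩
    exact ⟨m, by push_cast [hcast]; ring⟩
  · rintro ⟨m, rfl⟩
    exact ⟨2 * N / Int.gcd r (2 * N) * m, by push_cast [hcast]; ring, dvd_mul_right _ _⟩

theorem natCast_mul_trace_smul_lambdaR_mul_smul_lambdaR (hN : N ≠ 0) (p q : ℚ) :
    (N : ℚ) * Matrix.trace ((p • lambdaR N D r) * (q • lambdaR N D r)) = p * q * D / (2 * N) := by
  rw [smul_mul_smul_comm, Matrix.trace_smul, lambdaR, Matrix.mul_fin_two, Matrix.trace_fin_two_of,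
    smul_eq_mul]
  field_simp
  ring

theorem forall_trace_mul_smul_lambdaR_eq_intCast_iff (hN : 0 < N) (hD : D ≠ 0) (p : ℚ) :
    (∀ m : ℤ, ∃ k : ℤ, (N : ℚ) * Matrix.trace
        (((m * (2 * N / (Int.gcd r (2 * N) : ℚ))) • lambdaR N D r) * (p • lambdaR N D r)) = k) ↔
      ∃ k : ℤ, p = k * ((Int.gcd r (2 * N) : ℚ) / D) := by
  have ht : (Int.gcd r (2 * N) : ℚ) ≠ 0 := by
    exact_mod_cast (Int.gcd_pos_of_ne_zero_right r (by positivity)).ne'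
  have hDQ : (D : ℚ) ≠ 0 := by exact_mod_cast hD
  have hN' : (N : ℚ) ≠ 0 := by positivity
  have hpair : ∀ m : ℤ, (m * (2 * N / (Int.gcd r (2 * N) : ℚ))) * p * D / (2 * N) =
      m * (p * D / Int.gcd r (2 * N)) := fun m => by field_simp
  simp_rw [natCast_mul_trace_smul_lambdaR_mul_smul_lambdaR hN.ne', hpair,
    forall_intCast_mul_eq_intCast_iff, div_eq_iff ht, ← mul_div_assoc, eq_div_iff hDQ]

end lambdaR

/-- with t = gcd(r, 2N), the rank one lattice 𝒩 = L ∩ ℚ·λ_r equals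
ℤ·(2N/t)·λ_r, and its dual inside ℚ·λ_r (w.r.t. (x,y) = N·tr(xy)) is 𝒩' = ℤ·(t/D)·λ_r. -/
theorem stmt11 (N : ℕ) (hN : 0 < N) (D r : ℤ) (hD : D < 0)
    (hr : (4 * (N : ℤ)) ∣ (D - r ^ 2)) :
    (Lset N ∩ {x | ∃ q : ℚ, x = q • lambdaR N D r} =
        {x | ∃ m : ℤ, x = ((m : ℚ) * (2 * (N : ℚ) / (Int.gcd r (2 * N) : ℚ))) •
          lambdaR N D r}) ∧
      ({y | (∃ q : ℚ, y = q • lambdaR N D r) ∧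
          ∀ x ∈ Lset N ∩ {x | ∃ q : ℚ, x = q • lambdaR N D r},
            ∃ k : ℤ, (N : ℚ) * Matrix.trace (x * y) = (k : ℚ)} =
        {y | ∃ m : ℤ, y = ((m : ℚ) * ((Int.gcd r (2 * N) : ℚ) / (D : ℚ))) •
          lambdaR N D r}) := by
  have hlattice : Lset N ∩ {x | ∃ q : ℚ, x = q • lambdaR N D r} =
      {x | ∃ m : ℤ, x = ((m : ℚ) * (2 * (N : ℚ) / (Int.gcd r (2 * N) : ℚ))) • lambdaR N D r} := by
    ext x
    constructor
    · rintro ⟨hL, q, rfl⟩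
      obtain ⟨m, rfl⟩ := (smul_lambdaR_mem_Lset_iff_exists_mul hN hr q).1 hL
      exact ⟨m, rfl⟩
    · rintro ⟨m, rfl⟩
      exact ⟨(smul_lambdaR_mem_Lset_iff_exists_mul hN hr _).2 ⟨m, rfl⟩, _, rfl⟩
  refine ⟨hlattice, ?_⟩
  rw [hlattice]
  ext y
  constructor
  · rintro ⟨⟨p, rfl⟩, hdual⟩
    obtain ⟨k, rfl⟩ :=
      (forall_trace_mul_smul_lambdaR_eq_intCast_iff hN hD.ne p).1 fun m => hdual _ ⟨m, rfl⟩
    exact ⟨k, rfl⟩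
  · rintro ⟨k, rfl⟩
    refine ⟨⟨_, rfl⟩, ?_⟩
    rintro x ⟨m, rfl⟩
    exact (forall_trace_mul_smul_lambdaR_eq_intCast_iff hN hD.ne _).2 ⟨k, rfl⟩ m
end

section
/- Let D be an odd negative fundamental discriminant, 𝔞 = (A, (B+√D)/2) an integral ideal with gcd(A,D) = 1, and R = FD where 2AE + BF = 1. Then the ideal 𝔟 = (A|D|, (R+√D)/2) equals 𝔡_k · 𝔞, where 𝔡_k = (√D) is the different of k = Q(√D). In particular [𝔟] = [𝔞] in the class group, since 𝔡_k is principal. -/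
/-!
Both sides are generated by two elements as abelian groups, so it suffices to write each
generator of one as an integral combination of the generators of the other.
With `s² = D` and `2AE + BF = 1`:
`A D = -B (s A) + 2A (s (B + s)/2)`, `(F D + s)/2 = E (s A) + F (s (B + s)/2)`,
`s A = -F (A D) + 2A ((F D + s)/2)` and `s (B + s)/2 = E (A D) + B ((F D + s)/2)`.
-/

/-- A fundamental discriminant: either D ≡ 1 (mod 4) and D squarefree, or D = 4m with
m ≡ 2, 3 (mod 4) and m squarefree. -/
def IsFundamentalDiscriminant (D : ℤ) : Prop :=
  (D % 4 = 1 ∧ Squarefree D) ∨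
    (D % 4 = 0 ∧ Squarefree (D / 4) ∧ (D / 4 % 4 = 2 ∨ D / 4 % 4 = 3))

namespace AddSubgroup

variable {G : Type*} [AddCommGroup G]

theorem closure_pair_eq_of_mem {x y x' y' : G}
    (hx : x ∈ closure {x', y'}) (hy : y ∈ closure {x', y'})
    (hx' : x' ∈ closure {x, y}) (hy' : y' ∈ closure {x, y}) :
    closure {x, y} = closure {x', y'} :=
  le_antisymm ((closure_le _).2 (Set.pair_subset_iff.2 ⟨hx, hy⟩))
    ((closure_le _).2 (Set.pair_subset_iff.2 ⟨hx', hy'⟩))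

theorem closure_neg_pair (x y : G) : closure {-x, y} = closure {x, y} :=
  closure_pair_eq_of_mem (mem_closure_pair.2 ⟨-1, 0, by simp⟩)
    (mem_closure_pair.2 ⟨0, 1, by simp⟩) (mem_closure_pair.2 ⟨-1, 0, by simp⟩)
    (mem_closure_pair.2 ⟨0, 1, by simp⟩)

end AddSubgroup

open AddSubgroup

theorem closure_mul_sqrt_pair_eq {K : Type*} [Field K] [CharZero K] {D A B E F : ℤ} {s : K}
    (hs : s ^ 2 = D) (hEF : 2 * A * E + B * F = 1) :
    closure {((A * D : ℤ) : K), (((F * D : ℤ) : K) + s) / 2} =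
      closure {s * A, s * ((B + s) / 2)} := by
  have hEF' : (2 * A * E + B * F : K) = 1 := mod_cast hEF
  refine closure_pair_eq_of_mem (mem_closure_pair.2 ⟨-B, 2 * A, ?_⟩)
    (mem_closure_pair.2 ⟨E, F, ?_⟩) (mem_closure_pair.2 ⟨-F, 2 * A, ?_⟩)
    (mem_closure_pair.2 ⟨E, B, ?_⟩) <;>
  simp only [zsmul_eq_mul] <;> push_cast
  · linear_combination (A : K) * hs
  · linear_combination (F / 2 : K) * hs + (s / 2) * hEF'
  · ring
  · linear_combination (-1 / 2 : K) * hs + (D / 2 : K) * hEF'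

theorem stmt13_general (D A B E F : ℤ) (hEF : 2 * A * E + B * F = 1)
    (s : ℂ) (hs : s ^ 2 = (D : ℂ)) :
    AddSubgroup.closure {((A * |D| : ℤ) : ℂ), (((F * D : ℤ) : ℂ) + s) / 2} =
      AddSubgroup.map (AddMonoidHom.mulLeft s)
        (AddSubgroup.closure {((A : ℤ) : ℂ), (((B : ℤ) : ℂ) + s) / 2}) := by
  rw [AddMonoidHom.map_closure, Set.image_pair, AddMonoidHom.coe_mulLeft,
    ← closure_mul_sqrt_pair_eq hs hEF]
  rcases abs_choice D with h | h
  · rw [h]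
  · rw [h, mul_neg, Int.cast_neg, closure_neg_pair]

/-- let D be an odd negative fundamental discriminant,
𝔞 = (A, (B+√D)/2) (corresponding to the form [A,B,C], D = B² - 4AC, gcd(A,D) = 1),
E, F with 2AE + BF = 1 and R = FD.  Then, realizing the ideals as ℤ-modules inside ℂ
(with s = √D, Im s > 0), one has 𝔟 = (A|D|, (R+√D)/2) = √D · (A, (B+√D)/2) = 𝔡_k·𝔞,
where the different 𝔡_k = (√D) is principal; in particular [𝔟] = [𝔞]. -/
theorem stmt13 (D A B C E F : ℤ) (hD : D < 0) (hDodd : Odd D)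
    (hfund : IsFundamentalDiscriminant D) (hform : D = B ^ 2 - 4 * A * C)
    (hA : 0 < A) (hcop : IsCoprime A D) (hEF : 2 * A * E + B * F = 1)
    (s : ℂ) (hs : s ^ 2 = (D : ℂ)) (him : 0 < s.im) :
    AddSubgroup.closure {((A * |D| : ℤ) : ℂ), (((F * D : ℤ) : ℂ) + s) / 2} =
      AddSubgroup.map (AddMonoidHom.mulLeft s)
        (AddSubgroup.closure {((A : ℤ) : ℂ), (((B : ℤ) : ℂ) + s) / 2}) :=
  stmt13_general D A B E F hEF s hs
end
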